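/- Let X be a hyperinner product space over F and define ‖x‖ = √(x,x). Then ‖·‖ satisfies all the axioms of a norm on the weak hypervector space X: (1) ‖x‖ = 0 ⟺ x = 0; (2) sup‖x#y‖ ≤ ‖x‖ + ‖y‖; (3) sup‖a∘x‖ = |a|·‖x‖. -/
import Mathlib


open scoped BigOperators

/-- A weak hypervector space over `F` (ℝ or ℂ): a commutative hypergroup `(X, #)`
together with a scalar hyperproduct `∘ : F × X → P*(X)`. -/
structure WeakHVS (F : Type*) [RCLike F] (X : Type*) where
  hop : X → X → Set X
  hop_nonempty : ∀ x y, (hop x y).Nonempty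
  zero : X
  neg : X → X
  comm : ∀ x y, hop x y = hop y x
  hassoc : ∀ x y z,
    ((⋃ u ∈ hop x y, hop u z) ∩ (⋃ v ∈ hop y z, hop x v)).Nonempty
  zero_mem : ∀ x, zero ∈ hop x (neg x) ∧ zero ∈ hop (neg x) x
  neg_unique : ∀ x y, zero ∈ hop x y → zero ∈ hop y x → y = neg x
  zero_unique : ∀ z : X, (∀ x, ∃! y, z ∈ hop x y ∧ z ∈ hop y x) → z = zero
  hmem : ∀ x y, x ∈ (⋃ u ∈ hop x y, hop u (neg y)) ∩ hop x zero
  smul : F → X → Set X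
  smul_nonempty : ∀ a x, (smul a x).Nonempty
  /-- (1) weak right distributivity -/
  distrib_r : ∀ (a : F) (x y : X),
    ((⋃ u ∈ hop x y, smul a u) ∩ (⋃ u ∈ smul a x, ⋃ v ∈ smul a y, hop u v)).Nonempty
  /-- (2) weak left distributivity -/
  distrib_l : ∀ (a b : F) (x : X),
    ((smul (a + b) x) ∩ (⋃ u ∈ smul a x, ⋃ v ∈ smul b x, hop u v)).Nonempty
  /-- (3) -/
  smul_assoc : ∀ (a b : F) (x : X), (⋃ y ∈ smul b x, smul a y) = smul (a * b) x
  /-- (4) -/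
  smul_neg : ∀ (a : F) (x : X),
    smul a (neg x) = smul (-a) x ∧ smul (-a) x = neg '' smul a x
  /-- (5) -/
  one_smul_mem : ∀ x, x ∈ smul 1 x


/-- A hyperinner product space: a weak hypervector space with an inner product
satisfying axioms (1)–(7) of Definition 3.8, with chosen essential points
`essAdd x y = e_{x#y}` and `essSmul a x = e_{a∘x}`. -/
structure HyperInnerSpace (F : Type*) [RCLike F] (X : Type*) extends WeakHVS F X where
  ip : X → X → F
  /-- (1) -/
  ip_pos : ∀ x, x ≠ zero → 0 < RCLike.re (ip x x)
  /-- (2) -/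
  ip_self_eq_zero : ∀ x, ip x x = 0 ↔ x = zero
  essAdd : X → X → X
  essAdd_spec : ∀ x y,
    (zero ∈ hop x y ∧ essAdd x y = zero) ∨
    (zero ∉ hop x y ∧ essAdd x y ∈ hop x y ∧ x ∈ hop (essAdd x y) (neg y))
  /-- (3) -/
  ip_add : ∀ x y z, ip x z + ip y z = ip (essAdd x y) z
  /-- (4) -/
  ip_conj_symm : ∀ x y, ip y x = starRingEnd F (ip x y)
  essSmul : F → X → X
  essSmul_spec : ∀ (a : F) (x : X),
    (a = 0 ∧ essSmul a x = zero) ∨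
    (a ≠ 0 ∧ essSmul a x ∈ smul a x ∧ x ∈ smul a⁻¹ (essSmul a x))
  /-- (5) -/
  ip_smul : ∀ (a : F) (x y : X), a * ip x y = ip (essSmul a x) y
  /-- (6) -/
  ip_le_essAdd : ∀ x y, ∀ u ∈ hop x y,
    RCLike.re (ip u u) ≤ RCLike.re (ip (essAdd x y) (essAdd x y))
  /-- (7) -/
  ip_le_one_smul : ∀ x, ∀ u ∈ smul 1 x, RCLike.re (ip u u) ≤ RCLike.re (ip x x)

section Aux

variable {F X : Type*} [RCLike F] (H : HyperInnerSpace F X)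

/-- The squared norm. -/
private def nsq (u : X) : ℝ := RCLike.re (H.ip u u)

lemma hip_self_conj (x : X) : (starRingEnd F) (H.ip x x) = H.ip x x :=
  (H.ip_conj_symm x x).symm

lemma hip_nsq_nonneg (x : X) : 0 ≤ nsq H x := by
  by_cases hx : x = H.zero
  · simp [nsq, hx, (H.ip_self_eq_zero H.zero).mpr rfl]
  · exact le_of_lt (H.ip_pos x hx)

lemma hip_essSmul_zero (x : X) : H.essSmul 0 x = H.zero := by
  rcases H.essSmul_spec 0 x with ⟨_, h⟩ | ⟨hne, _⟩
  · exact h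
  · exact absurd rfl hne

lemma hip_zero_left (z : X) : H.ip H.zero z = 0 := by
  have h := H.ip_smul 0 z z
  rw [hip_essSmul_zero] at h
  simpa using h.symm

lemma hip_zero_right (z : X) : H.ip z H.zero = 0 := by
  rw [H.ip_conj_symm, hip_zero_left, map_zero]

/-- squared norm of the essential point of `a ∘ x`. -/
lemma hip_nsq_essSmul (a : F) (x : X) :
    nsq H (H.essSmul a x) = ‖a‖ ^ 2 * nsq H x := by
  set e := H.essSmul a x with he
  have h1 : H.ip e x = a * H.ip x x := (H.ip_smul a x x).symm
  have h2 : H.ip x e = (starRingEnd F) a * H.ip x x := by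
    rw [H.ip_conj_symm e x, h1, map_mul, hip_self_conj]
  have h3 : H.ip e e = a * ((starRingEnd F) a * H.ip x x) := by
    rw [← h2]; exact (H.ip_smul a x e).symm
  have h4 : H.ip e e = ((‖a‖ ^ 2 : ℝ) : F) * H.ip x x := by
    rw [h3, ← mul_assoc, RCLike.mul_conj]
    push_cast
    ring
  simp only [nsq]
  rw [h4, RCLike.re_ofReal_mul]

/-- squared norm of the essential point of `x # y`. -/
lemma hip_nsq_essAdd (x y : X) :
    nsq H (H.essAdd x y) =
      nsq H x + nsq H y + 2 * RCLike.re (H.ip x y) := by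
  set e := H.essAdd x y with he
  have h1 : H.ip e e = H.ip x e + H.ip y e := (H.ip_add x y e).symm
  have h2 : H.ip x e = (starRingEnd F) (H.ip x x + H.ip y x) := by
    rw [H.ip_conj_symm e x, ← H.ip_add]
  have h3 : H.ip y e = (starRingEnd F) (H.ip x y + H.ip y y) := by
    rw [H.ip_conj_symm e y, ← H.ip_add]
  have h4 : RCLike.re (H.ip y x) = RCLike.re (H.ip x y) := by
    rw [H.ip_conj_symm x y, RCLike.conj_re]
  have : RCLike.re (H.ip e e)
      = RCLike.re (H.ip x x) + RCLike.re (H.ip y x)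
        + (RCLike.re (H.ip x y) + RCLike.re (H.ip y y)) := by
    rw [h1, map_add, h2, h3, RCLike.conj_re, RCLike.conj_re, map_add, map_add]
  simp only [nsq]
  rw [this, h4]; ring

/-- Cauchy–Schwarz for the real part. -/
lemma hip_re_le (x y : X) :
    RCLike.re (H.ip x y) ≤ Real.sqrt (nsq H x) * Real.sqrt (nsq H y) := by
  set R := RCLike.re (H.ip x y) with hR
  have key : ∀ t : ℝ, 0 ≤ nsq H y * (t * t) + (2 * R) * t + nsq H x := by
    intro t
    have hmem := hip_nsq_essAdd H x (H.essSmul (t : F) y)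
    have h1 : nsq H (H.essSmul (t : F) y) = t ^ 2 * nsq H y := by
      rw [hip_nsq_essSmul, RCLike.norm_ofReal, sq_abs]
    have h2 : RCLike.re (H.ip x (H.essSmul (t : F) y)) = t * R := by
      have : H.ip x (H.essSmul (t : F) y)
          = (starRingEnd F) ((t : F) * H.ip y x) := by
        rw [H.ip_conj_symm (H.essSmul (t : F) y) x, ← H.ip_smul]
      rw [this, map_mul, RCLike.conj_ofReal, RCLike.re_ofReal_mul,
        RCLike.conj_re, H.ip_conj_symm x y, RCLike.conj_re]
    have h0 : 0 ≤ nsq H (H.essAdd x (H.essSmul (t : F) y)) := hip_nsq_nonneg H _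
    rw [hmem, h1, h2] at h0
    nlinarith [h0]
  have hd := discrim_le_zero key
  have hdisc : (2 * R) ^ 2 - 4 * nsq H y * nsq H x ≤ 0 := by
    simpa [discrim] using hd
  have hsq : R ^ 2 ≤ nsq H x * nsq H y := by nlinarith
  calc R ≤ |R| := le_abs_self R
    _ = Real.sqrt (R ^ 2) := (Real.sqrt_sq_eq_abs R).symm
    _ ≤ Real.sqrt (nsq H x * nsq H y) := Real.sqrt_le_sqrt hsq
    _ = Real.sqrt (nsq H x) * Real.sqrt (nsq H y) :=
        Real.sqrt_mul (hip_nsq_nonneg H x) _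

/-- Any member of `a ∘ x` (with `a ≠ 0`) has squared norm at most `‖a‖² ‖x‖²`. -/
lemma hip_nsq_smul_le (a : F) (ha : a ≠ 0) (x : X) {u : X} (hu : u ∈ H.smul a x) :
    nsq H u ≤ ‖a‖ ^ 2 * nsq H x := by
  rcases H.essSmul_spec a x with ⟨h0, _⟩ | ⟨_, hmem, hx⟩
  · exact absurd h0 ha
  set e := H.essSmul a x with he
  have hsub : H.smul a x ⊆ H.smul 1 e := by
    have hassoc := H.smul_assoc a a⁻¹ e
    rw [mul_inv_cancel₀ ha] at hassoc
    rw [← hassoc]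
    intro v hv
    exact Set.mem_biUnion hx hv
  have hle := H.ip_le_one_smul e u (hsub hu)
  have : nsq H u ≤ nsq H e := hle
  rw [hip_nsq_essSmul] at this
  exact this

end Aux

/-- `‖x‖ = √(x, x)` satisfies all the axioms of a norm on `X`. -/
theorem hip_norm_axioms {F X : Type*} [RCLike F] (H : HyperInnerSpace F X) :
    (∀ x : X, Real.sqrt (RCLike.re (H.ip x x)) = 0 ↔ x = H.zero) ∧
    (∀ x y : X,
      sSup ((fun u => Real.sqrt (RCLike.re (H.ip u u))) '' H.hop x y) ≤
        Real.sqrt (RCLike.re (H.ip x x)) + Real.sqrt (RCLike.re (H.ip y y))) ∧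
    (∀ (a : F) (x : X),
      sSup ((fun u => Real.sqrt (RCLike.re (H.ip u u))) '' H.smul a x) =
        ‖a‖ * Real.sqrt (RCLike.re (H.ip x x))) := by
  refine ⟨?_, ?_, ?_⟩
  · -- (1)
    intro x
    constructor
    · intro h
      by_contra hx
      have hpos : 0 < RCLike.re (H.ip x x) := H.ip_pos x hx
      have := Real.sqrt_pos.mpr hpos
      linarith
    · intro h
      subst h
      simp [(H.ip_self_eq_zero H.zero).mpr rfl]
  · -- (2) triangle inequality
    intro x y
    have hnx : 0 ≤ Real.sqrt (nsq H x) := Real.sqrt_nonneg _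
    have hny : 0 ≤ Real.sqrt (nsq H y) := Real.sqrt_nonneg _
    apply Real.sSup_le _ (by positivity)
    rintro r ⟨u, hu, rfl⟩
    have h1 : nsq H u ≤ nsq H (H.essAdd x y) := H.ip_le_essAdd x y u hu
    have h2 : nsq H (H.essAdd x y)
        ≤ (Real.sqrt (nsq H x) + Real.sqrt (nsq H y)) ^ 2 := by
      rw [hip_nsq_essAdd]
      have hcs := hip_re_le H x y
      have hx2 : Real.sqrt (nsq H x) ^ 2 = nsq H x := Real.sq_sqrt (hip_nsq_nonneg H x)
      have hy2 : Real.sqrt (nsq H y) ^ 2 = nsq H y := Real.sq_sqrt (hip_nsq_nonneg H y)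
      nlinarith
    calc Real.sqrt (RCLike.re (H.ip u u))
        ≤ Real.sqrt ((Real.sqrt (nsq H x) + Real.sqrt (nsq H y)) ^ 2) :=
          Real.sqrt_le_sqrt (le_trans h1 h2)
      _ = Real.sqrt (nsq H x) + Real.sqrt (nsq H y) := by
          rw [Real.sqrt_sq (by positivity)]
      _ = _ := rfl
  · -- (3) homogeneity
    intro a x
    by_cases ha : a = 0
    · subst ha
      simp only [norm_zero, zero_mul]
      by_cases hall : ∀ u ∈ H.smul 0 x, RCLike.re (H.ip u u) ≤ 0
      · apply le_antisymm
        · apply Real.sSup_le _ le_rfl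
          rintro r ⟨u, hu, rfl⟩
          simp [Real.sqrt_eq_zero'.mpr (hall u hu)]
        · obtain ⟨u0, hu0⟩ := H.smul_nonempty 0 x
          have hmem : (0 : ℝ) ∈ (fun u => Real.sqrt (RCLike.re (H.ip u u))) '' H.smul 0 x :=
            ⟨u0, hu0, by simp [Real.sqrt_eq_zero'.mpr (hall u0 hu0)]⟩
          refine le_csSup ⟨0, ?_⟩ hmem
          rintro r ⟨u, hu, rfl⟩
          simp [Real.sqrt_eq_zero'.mpr (hall u hu)]
      · push_neg at hall
        obtain ⟨u, hu, hupos⟩ := hall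
        apply Real.sSup_of_not_bddAbove
        rintro ⟨M, hM⟩
        set c := Real.sqrt (nsq H u) with hc
        have hcpos : 0 < c := Real.sqrt_pos.mpr hupos
        set r : ℝ := (|M| + 1) / c with hr
        have hrpos : 0 < r := by positivity
        have hrne : ((r : ℝ) : F) ≠ 0 := by
          simpa using ne_of_gt hrpos
        -- essSmul (r : F) u belongs to smul 0 x
        have hsub : H.smul ((r : ℝ) : F) u ⊆ H.smul 0 x := by
          have hassoc := H.smul_assoc ((r : ℝ) : F) 0 x
          rw [mul_zero] at hassoc
          rw [← hassoc]
          intro v hv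
          exact Set.mem_biUnion hu hv
        rcases H.essSmul_spec ((r : ℝ) : F) u with ⟨h0, _⟩ | ⟨_, hmem, _⟩
        · exact absurd h0 hrne
        have hval : Real.sqrt (RCLike.re (H.ip (H.essSmul ((r : ℝ) : F) u)
            (H.essSmul ((r : ℝ) : F) u))) = r * c := by
          have := hip_nsq_essSmul H ((r : ℝ) : F) u
          simp only [nsq] at this ⊢
          rw [this, RCLike.norm_ofReal, Real.sqrt_mul (by positivity), Real.sqrt_sq_eq_abs,
            abs_abs, abs_of_pos hrpos]
          rfl
        have hin : r * c ∈ (fun u => Real.sqrt (RCLike.re (H.ip u u))) '' H.smul 0 x :=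
          ⟨H.essSmul ((r : ℝ) : F) u, hsub hmem, hval⟩
        have hle := hM hin
        have : r * c = |M| + 1 := by
          rw [hr]; field_simp
        rw [this] at hle
        have := le_abs_self M
        linarith
    · -- a ≠ 0
      have hbound : ∀ v ∈ (fun u => Real.sqrt (RCLike.re (H.ip u u))) '' H.smul a x,
          v ≤ ‖a‖ * Real.sqrt (nsq H x) := by
        rintro v ⟨u, hu, rfl⟩
        have h1 := hip_nsq_smul_le H a ha x hu
        calc Real.sqrt (RCLike.re (H.ip u u))
            ≤ Real.sqrt (‖a‖ ^ 2 * nsq H x) := Real.sqrt_le_sqrt h1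
          _ = ‖a‖ * Real.sqrt (nsq H x) := by
              rw [Real.sqrt_mul (by positivity), Real.sqrt_sq (norm_nonneg a)]
      apply le_antisymm
      · exact Real.sSup_le hbound (by positivity)
      · rcases H.essSmul_spec a x with ⟨h0, _⟩ | ⟨_, hmem, _⟩
        · exact absurd h0 ha
        have hval : Real.sqrt (RCLike.re (H.ip (H.essSmul a x) (H.essSmul a x)))
            = ‖a‖ * Real.sqrt (nsq H x) := by
          have := hip_nsq_essSmul H a x
          simp only [nsq] at this ⊢
          rw [this, Real.sqrt_mul (by positivity), Real.sqrt_sq (norm_nonneg a)]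
        refine le_of_eq (hval.symm.trans ?_) |>.trans (le_csSup ⟨_, hbound⟩ ⟨_, hmem, rfl⟩)
        rfl
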